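/- arXiv:1702.04416 — 2 statements merged into one kernel-verified Lean document; each statement's English description precedes it below -/
import Mathlib

section
/- Let Γ be the free group on two generators a and b, and let ℤΓ = MonoidAlgebra ℤ Γ be its integral group ring. The map (ℤΓ) × (ℤΓ) → ℤΓ sending (x, y) to x·(a − 1) + y·(b − 1) (where a, b denote the images in ℤΓ of the two free generators, and 1 is the identity of ℤΓ) is an injective homomorphism of left ℤΓ-modules. -/
/-!
The Fox derivative `∂ⱼ` of `k[F(α)]` is the additive map with `∂ⱼ (x * g) = x * ∂ⱼ g + ∂ⱼ x`
and `∂ⱼ sᵢ = δᵢⱼ`. On group elements it is the translation part of the affine action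
`x ↦ g * x + ∂ⱼ g` of `F(α)` on `k[F(α)]`, which exists because `F(α)` is free: `sᵢ` may act by
`x ↦ sᵢ * x + δᵢⱼ`. Since `∂ⱼ (x * (sᵢ - 1)) = δᵢⱼ x`, the pair `(∂₀, ∂₁)` is a left inverse of
`(x, y) ↦ x * (a - 1) + y * (b - 1)`.
-/

noncomputable section

variable (k : Type*) [Ring k] {α : Type*} [DecidableEq α]

def foxAffine (j : α) : FreeGroup α →* Equiv.Perm (MonoidAlgebra k (FreeGroup α)) :=
  FreeGroup.lift fun i ↦ Equiv.addRight (if i = j then 1 else 0) *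
    Units.mulLeft ((MonoidAlgebra.of k _).toHomUnits (FreeGroup.of i))

def foxCocycle (j : α) (g : FreeGroup α) : MonoidAlgebra k (FreeGroup α) :=
  foxAffine k j g 0

variable {k}

theorem foxAffine_apply (j : α) (g : FreeGroup α) (x : MonoidAlgebra k (FreeGroup α)) :
    foxAffine k j g x = MonoidAlgebra.of k _ g * x + foxCocycle k j g := by
  induction g generalizing x with
  | C1 => simp only [foxCocycle, map_one, Equiv.Perm.one_apply, one_mul, add_zero]
  | of i => simp [foxAffine, foxCocycle]
  | inv_of i h =>
    have hu :
        MonoidAlgebra.of k _ (FreeGroup.of i) * MonoidAlgebra.of k _ (FreeGroup.of i)⁻¹ = 1 := by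
      rw [← map_mul, mul_inv_cancel, map_one]
    apply (foxAffine k j (FreeGroup.of i)).injective
    rw [foxCocycle, map_inv, Equiv.Perm.coe_inv, Equiv.apply_symm_apply, h, mul_add,
      ← mul_assoc, hu, one_mul, add_assoc, ← h, Equiv.apply_symm_apply, add_zero]
  | mul g h hg hh =>
    rw [foxCocycle, map_mul, Equiv.Perm.mul_apply, Equiv.Perm.mul_apply, hg, hg, hh, hh]
    simp only [map_mul, mul_add, mul_assoc, mul_zero, zero_add, add_assoc]

theorem foxCocycle_mul (j : α) (g h : FreeGroup α) :
    foxCocycle k j (g * h) = MonoidAlgebra.of k _ g * foxCocycle k j h + foxCocycle k j g := by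
  rw [foxCocycle, map_mul, Equiv.Perm.mul_apply, foxAffine_apply, ← foxCocycle]

theorem foxCocycle_of (j i : α) : foxCocycle k j (FreeGroup.of i) = if i = j then 1 else 0 := by
  simp [foxCocycle, foxAffine]

def foxDeriv (j : α) : MonoidAlgebra k (FreeGroup α) →+ MonoidAlgebra k (FreeGroup α) :=
  MonoidAlgebra.liftNC MonoidAlgebra.singleOneRingHom.toAddMonoidHom (foxCocycle k j)

theorem foxDeriv_single (j : α) (g : FreeGroup α) (c : k) :
    foxDeriv j (.single g c) = .single 1 c * foxCocycle k j g :=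
  MonoidAlgebra.liftNC_single _ _ _ _

theorem foxDeriv_mul_of (j : α) (x : MonoidAlgebra k (FreeGroup α)) (g : FreeGroup α) :
    foxDeriv j (x * MonoidAlgebra.of k _ g) = x * foxCocycle k j g + foxDeriv j x := by
  induction x using MonoidAlgebra.induction_linear with
  | zero => simp
  | add x y hx hy => rw [add_mul, map_add, hx, hy, map_add, add_mul]; abel
  | single h c =>
    have hc : MonoidAlgebra.single 1 c * MonoidAlgebra.of k _ h = .single h c := by
      rw [MonoidAlgebra.of_apply, MonoidAlgebra.single_mul_single, one_mul, mul_one]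
    rw [MonoidAlgebra.of_apply, MonoidAlgebra.single_mul_single, mul_one, foxDeriv_single,
      foxCocycle_mul, mul_add, ← mul_assoc, hc, foxDeriv_single]

theorem foxDeriv_mul_of_sub_one (j : α) (x : MonoidAlgebra k (FreeGroup α)) (g : FreeGroup α) :
    foxDeriv j (x * (MonoidAlgebra.of k _ g - 1)) = x * foxCocycle k j g := by
  rw [mul_sub, mul_one, map_sub, foxDeriv_mul_of, add_sub_cancel_right]

theorem foxDeriv_mul_of_sub_one_add_of_ne {i j : α} (hij : i ≠ j)
    (x y : MonoidAlgebra k (FreeGroup α)) :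
    foxDeriv i (x * (MonoidAlgebra.of k _ (FreeGroup.of i) - 1)
      + y * (MonoidAlgebra.of k _ (FreeGroup.of j) - 1)) = x := by
  rw [map_add, foxDeriv_mul_of_sub_one, foxDeriv_mul_of_sub_one, foxCocycle_of, foxCocycle_of,
    if_pos rfl, if_neg hij.symm, mul_one, mul_zero, add_zero]

end

/-- For `Γ = F₂` the free group on generators `a, b`, the map
`(x, y) ↦ x(a-1) + y(b-1)` is an injective homomorphism of left `ℤΓ`-modules
`(ℤΓ)² → ℤΓ`. -/
theorem free_group_resolution_injective :
    ∃ f : (MonoidAlgebra ℤ (FreeGroup (Fin 2)) × MonoidAlgebra ℤ (FreeGroup (Fin 2)))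
        →ₗ[MonoidAlgebra ℤ (FreeGroup (Fin 2))] MonoidAlgebra ℤ (FreeGroup (Fin 2)),
      (∀ x y : MonoidAlgebra ℤ (FreeGroup (Fin 2)),
        f (x, y) = x * (MonoidAlgebra.of ℤ (FreeGroup (Fin 2)) (FreeGroup.of 0) - 1)
          + y * (MonoidAlgebra.of ℤ (FreeGroup (Fin 2)) (FreeGroup.of 1) - 1)) ∧
      Function.Injective f := by
  set R := MonoidAlgebra ℤ (FreeGroup (Fin 2))
  set f := (LinearMap.toSpanSingleton R R (MonoidAlgebra.of ℤ _ (FreeGroup.of 0) - 1)).coprod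
    (LinearMap.toSpanSingleton R R (MonoidAlgebra.of ℤ _ (FreeGroup.of 1) - 1))
  have hf (x y : R) : f (x, y) = x * (MonoidAlgebra.of ℤ _ (FreeGroup.of 0) - 1)
      + y * (MonoidAlgebra.of ℤ _ (FreeGroup.of 1) - 1) := by
    simp only [f, LinearMap.coprod_apply, LinearMap.toSpanSingleton_apply, smul_eq_mul]
  refine ⟨f, hf, Function.LeftInverse.injective (g := fun z ↦ (foxDeriv 0 z, foxDeriv 1 z)) ?_⟩
  rintro ⟨x, y⟩
  dsimp only
  rw [hf]
  refine Prod.ext (foxDeriv_mul_of_sub_one_add_of_ne (by decide) x y) ?_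
  rw [add_comm]
  exact foxDeriv_mul_of_sub_one_add_of_ne (by decide) y x
end

section
/- Let Γ be the free group on two generators a and b, let ℤΓ = MonoidAlgebra ℤ Γ be its integral group ring, and let ε : ℤΓ → ℤ be the augmentation ring homomorphism sending every group element to 1. Then the kernel of ε, viewed as a left ℤΓ-submodule of ℤΓ, is a free left ℤΓ-module of rank 2 with basis (a − 1, b − 1). -/
/-!
For any left ideal `I` of `k[G]`, the set of `g` with `g - 1 ∈ I` is a subgroup, so the augmentation
ideal (spanned by all `g - 1`) is already spanned by the `s - 1` for `s` in a generating set.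

For independence in the free group `F` on `α`, the Fox derivatives `d : F → (α →₀ k[F])` form a
crossed homomorphism, `d (g * h) = d g + g • d h`, with `d aᵢ = eᵢ`; it is read off from the lift
`aᵢ ↦ (eᵢ, aᵢ)` of `F` into the semidirect product of `α →₀ k[F]` by `F`. Its `k`-linear extension
`D` satisfies `D (x * (g - 1)) = x • d g`, so it is a left inverse of `c ↦ ∑ cᵢ * (aᵢ - 1)`.
-/

open MonoidAlgebra Submodule Set

namespace MonoidAlgebra

section Augmentation

variable {k G : Type*} [CommRing k] [Group G]

theorem of_sub_one_mem_span_of_closure_eq_top {ι : Type*} {s : ι → G}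
    (hs : Subgroup.closure (range s) = ⊤) (g : G) :
    of k G g - 1 ∈ span k[G] (range fun i ↦ of k G (s i) - 1) := by
  induction (hs ▸ Subgroup.mem_top g : g ∈ Subgroup.closure (range s)) using
    Subgroup.closure_induction with
  | mem x hx =>
    obtain ⟨i, rfl⟩ := hx
    exact subset_span ⟨i, rfl⟩
  | one => rw [map_one, sub_self]; exact zero_mem _
  | mul x y _ _ hx hy =>
    have : of k G (x * y) - 1 = of k G x * (of k G y - 1) + (of k G x - 1) := by
      rw [map_mul]; noncomm_ring
    exact this ▸ add_mem (smul_mem _ _ hy) hx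
  | inv x _ hx =>
    have : of k G x⁻¹ - 1 = -(of k G x⁻¹ * (of k G x - 1)) := by
      rw [mul_sub, ← map_mul, inv_mul_cancel, map_one, mul_one, neg_sub]
    exact this ▸ neg_mem (smul_mem _ _ hx)

variable (ε : k[G] →ₐ[k] k) (hε : ∀ g, ε (of k G g) = 1)
include hε

theorem sub_algebraMap_mem_span_of_sub_one (z : k[G]) :
    z - algebraMap k k[G] (ε z) ∈ span k[G] (range fun g ↦ of k G g - 1) := by
  induction z using MonoidAlgebra.induction_on with
  | of g => rw [hε, map_one]; exact subset_span ⟨g, rfl⟩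
  | add x y hx hy => rw [map_add, map_add, add_sub_add_comm]; exact add_mem hx hy
  | smul r x hx =>
    rw [map_smul, Algebra.algebraMap_eq_smul_one, smul_assoc, ← Algebra.algebraMap_eq_smul_one,
      ← smul_sub]
    exact smul_of_tower_mem _ r hx

theorem ker_eq_span_of_sub_one :
    RingHom.ker ε = span k[G] (range fun g ↦ of k G g - 1) := by
  refine le_antisymm (fun z hz ↦ ?_) (span_le.mpr ?_)
  · simpa [(RingHom.mem_ker).mp hz] using sub_algebraMap_mem_span_of_sub_one ε hε z
  · rintro _ ⟨g, rfl⟩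
    simp only [SetLike.mem_coe, RingHom.mem_ker, map_sub, hε, map_one, sub_self]

theorem ker_eq_span_of_closure_eq_top {ι : Type*} {s : ι → G}
    (hs : Subgroup.closure (range s) = ⊤) :
    RingHom.ker ε = span k[G] (range fun i ↦ of k G (s i) - 1) := by
  refine (ker_eq_span_of_sub_one ε hε).trans (le_antisymm (span_le.mpr ?_) (span_mono ?_))
  · rintro _ ⟨g, rfl⟩
    exact of_sub_one_mem_span_of_closure_eq_top hs g
  · rintro _ ⟨i, rfl⟩
    exact ⟨s i, rfl⟩

end Augmentation

section CrossedHom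

variable {k G M : Type*} [CommRing k] [Group G] [AddCommGroup M] [Module k[G] M] [Module k M]
  [IsScalarTower k k[G] M]

theorem linearCombination_coeff_mul_of_sub_one {d : G → M}
    (hd : ∀ g h, d (g * h) = d g + of k G g • d h) (x : k[G]) (g : G) :
    Finsupp.linearCombination k d (x * (of k G g - 1)).coeff = x • d g := by
  induction x using MonoidAlgebra.induction_on with
  | of h =>
    rw [mul_sub, mul_one, ← map_mul, coeff_sub, map_sub]
    simp [hd]
  | add x y hx hy => rw [add_mul, coeff_add, map_add, hx, hy, add_smul]
  | smul r x hx => rw [smul_mul_assoc, coeff_smul, map_smul, hx, smul_assoc]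

end CrossedHom

end MonoidAlgebra

namespace FreeGroup

variable (k : Type*) {α : Type*} [CommRing k]

noncomputable def foxAction :
    FreeGroup α →* MulAut (Multiplicative (α →₀ k[FreeGroup α])) :=
  (MulAutMultiplicative _).symm.toMonoidHom.comp
    ((DistribMulAction.toAddAut _ _).comp
      ((Units.map (MonoidAlgebra.of k _)).comp toUnits.toMonoidHom))

theorem foxAction_apply (g : FreeGroup α) (m : Multiplicative (α →₀ k[FreeGroup α])) :
    (foxAction k g m).toAdd = MonoidAlgebra.of k _ g • m.toAdd :=
  rfl

noncomputable def foxLift :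
    FreeGroup α →* Multiplicative (α →₀ k[FreeGroup α]) ⋊[foxAction k] FreeGroup α :=
  FreeGroup.lift fun i ↦ ⟨.ofAdd (Finsupp.single i 1), FreeGroup.of i⟩

theorem foxLift_right (g : FreeGroup α) : (foxLift k g).right = g := by
  suffices SemidirectProduct.rightHom.comp (foxLift k) = MonoidHom.id (FreeGroup α) from
    DFunLike.congr_fun this g
  ext i
  simp [foxLift]

noncomputable def foxDeriv (g : FreeGroup α) : α →₀ k[FreeGroup α] :=
  (foxLift k g).left.toAdd

theorem foxDeriv_mul (g h : FreeGroup α) :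
    foxDeriv k (g * h) = foxDeriv k g + MonoidAlgebra.of k _ g • foxDeriv k h := by
  rw [foxDeriv, _root_.map_mul, SemidirectProduct.mul_left, toAdd_mul, foxLift_right,
    foxAction_apply]
  rfl

theorem foxDeriv_of (i : α) : foxDeriv k (FreeGroup.of i) = Finsupp.single i 1 := by
  simp [foxDeriv, foxLift]

theorem linearIndependent_of_sub_one :
    LinearIndependent k[FreeGroup α] fun i ↦ MonoidAlgebra.of k (FreeGroup α) (of i) - 1 := by
  refine Function.LeftInverse.injective
    (g := fun x ↦ Finsupp.linearCombination k (foxDeriv k) x.coeff) fun c ↦ ?_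
  dsimp only
  induction c using Finsupp.induction_linear with
  | zero => simp
  | add c c' hc hc' => rw [map_add, coeff_add, map_add, hc, hc']
  | single i x =>
    rw [Finsupp.linearCombination_single, smul_eq_mul,
      linearCombination_coeff_mul_of_sub_one (foxDeriv_mul k), foxDeriv_of, Finsupp.smul_single,
      smul_eq_mul, mul_one]

variable {k}

noncomputable def augmentationKerBasis (ε : k[FreeGroup α] →ₐ[k] k)
    (hε : ∀ g, ε (MonoidAlgebra.of k _ g) = 1) :
    Module.Basis α k[FreeGroup α] (RingHom.ker ε) :=
  (Module.Basis.span (linearIndependent_of_sub_one k)).map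
    (LinearEquiv.ofEq _ _ (ker_eq_span_of_closure_eq_top ε hε (closure_range_of α)).symm)

theorem augmentationKerBasis_apply (ε : k[FreeGroup α] →ₐ[k] k)
    (hε : ∀ g, ε (MonoidAlgebra.of k _ g) = 1) (i : α) :
    (augmentationKerBasis ε hε i : k[FreeGroup α]) = MonoidAlgebra.of k _ (of i) - 1 := by
  simp [augmentationKerBasis, Module.Basis.span_apply]

end FreeGroup

/-- For `Γ = F₂` the free group on generators `a, b`, the kernel of the augmentation
ring homomorphism `ε : ℤΓ → ℤ`, viewed as a left `ℤΓ`-submodule of `ℤΓ`, is a free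
left `ℤΓ`-module of rank 2 with basis `(a - 1, b - 1)`. -/
theorem augmentation_ker_free_basis
    (ε : MonoidAlgebra ℤ (FreeGroup (Fin 2)) →+* ℤ)
    (hε : ∀ g : FreeGroup (Fin 2), ε (MonoidAlgebra.of ℤ (FreeGroup (Fin 2)) g) = 1) :
    ∃ bas : Module.Basis (Fin 2) (MonoidAlgebra ℤ (FreeGroup (Fin 2))) (RingHom.ker ε),
      ((bas 0 : RingHom.ker ε) : MonoidAlgebra ℤ (FreeGroup (Fin 2)))
          = MonoidAlgebra.of ℤ (FreeGroup (Fin 2)) (FreeGroup.of 0) - 1 ∧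
      ((bas 1 : RingHom.ker ε) : MonoidAlgebra ℤ (FreeGroup (Fin 2)))
          = MonoidAlgebra.of ℤ (FreeGroup (Fin 2)) (FreeGroup.of 1) - 1 :=
  ⟨FreeGroup.augmentationKerBasis ε.toIntAlgHom hε,
    FreeGroup.augmentationKerBasis_apply _ hε 0, FreeGroup.augmentationKerBasis_apply _ hε 1⟩
end
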